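/- Weighted, repeated-argument, double, less-than sum simplification: for every integer q ≥ 0, every tuple (x_0, …, x_q) of real numbers and every real τ, one has Σ_{0 ≤ i ≤ j ≤ q} x_i · e^{-τ[x_0, …, x_q, x_i, x_j]} = −(τ²/2) · (∂/∂τ) e^{-τ[x_0, …, x_q]} − Σ_{i=0}^{q} i · (∂/∂x_i) e^{-τ[x_0, …, x_q]}, where (∂/∂x_i) e^{-τ[x_0, …, x_q]} denotes the derivative at y = x_i of the function y ↦ e^{-τ[x_0, …, x_{i−1}, y, x_{i+1}, …, x_q]}, and [x_0, …, x_q, x_i, x_j] denotes the tuple (x_0, …, x_q) with x_i and then x_j appended. -/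

import Mathlib

open scoped BigOperators

/-- Complete homogeneous symmetric polynomial of degree `m` in the entries of the list `l`:
`h_m(x_0, …, x_q) = Σ_{k_0+⋯+k_q = m} x_0^{k_0}⋯x_q^{k_q}` (with `h_0 = 1`). -/
noncomputable def hsymm (l : List ℝ) (m : ℕ) : ℝ :=
  ∑ k ∈ Finset.Nat.antidiagonalTuple l.length m, ∏ i : Fin l.length, l.get i ^ k i

/-- Divided difference of the exponential `e^{t[x_0, …, x_q]}` over the tuple given by the
list `l` (of length `q+1`), defined by its (absolutely convergent) series
`Σ_{m=0}^∞ (t^{q+m}/(q+m)!) · h_m(x_0, …, x_q)`; by convention it is `0` on the empty tuple. -/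
noncomputable def dde (t : ℝ) (l : List ℝ) : ℝ :=
  if l.length = 0 then 0
  else ∑' m : ℕ, t ^ (l.length - 1 + m) / (Nat.factorial (l.length - 1 + m)) * hsymm l m

/-- The sub-tuple `[x_a, …, x_b]` of the sequence `x`, as a list (empty if `b < a`). -/
def seg (x : ℕ → ℝ) (a b : ℕ) : List ℝ :=
  (List.range (b + 1 - a)).map (fun i => x (a + i))

/-!
Expand every divided difference in its defining series. After shifting indices, all three sides
become series with the common coefficients `(-τ)^(q+1+m)/(q+1+m)!`, so the claim reduces to an
identity between complete homogeneous polynomials for each `m`. The left side uses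
`y h_m(y,z,L) = h_{m+1}(y,z,L) - h_{m+1}(z,L)`; `∂/∂x_i` appends `x_i` to the tuple because
`∂_y h_{m+1}(y,L) = h_m(y,y,L)`; the `τ`-derivative is taken term by term. The resulting polynomial
identity follows by symmetrizing the sum over `i ≤ j` and using the Euler-type relation
`Σ_{z ∈ L} h_m(z,L) = (|L| + m) h_m(L)`.
-/

open Finset
open scoped Nat

theorem Finset.Nat.sum_antidiagonalTuple_succ {M : Type*} [AddCommMonoid M] (k n : ℕ)
    (f : (Fin (k + 1) → ℕ) → M) :
    ∑ x ∈ Nat.antidiagonalTuple (k + 1) n, f x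
      = ∑ p ∈ antidiagonal n, ∑ x ∈ Nat.antidiagonalTuple k p.2, f (Fin.cons p.1 x) := by
  change (((List.Nat.antidiagonalTuple (k + 1) n).map f).sum : M)
    = ((List.Nat.antidiagonal n).map fun p =>
        ((List.Nat.antidiagonalTuple k p.2).map fun x => f (Fin.cons p.1 x)).sum).sum
  simp [List.Nat.antidiagonalTuple, List.flatMap, List.sum_flatten, Function.comp_def]

theorem hsymm_zero (l : List ℝ) : hsymm l 0 = 1 := by
  simp [hsymm, Finset.Nat.antidiagonalTuple_zero_right]

theorem hsymm_nil_succ (m : ℕ) : hsymm [] (m + 1) = 0 := by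
  simp [hsymm]

theorem hsymm_cons (y : ℝ) (l : List ℝ) (m : ℕ) :
    hsymm (y :: l) m = ∑ p ∈ antidiagonal m, y ^ p.1 * hsymm l p.2 := by
  simp [hsymm, Finset.Nat.sum_antidiagonalTuple_succ, Fin.prod_univ_succ, mul_sum]

theorem hsymm_cons_succ (y : ℝ) (l : List ℝ) (m : ℕ) :
    hsymm (y :: l) (m + 1) = hsymm l (m + 1) + y * hsymm (y :: l) m := by
  rw [hsymm_cons, Finset.Nat.sum_antidiagonal_succ, hsymm_cons, mul_sum]
  simp [pow_succ, mul_comm, mul_left_comm]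

theorem hsymm_eq_coeff_prod (l : List ℝ) (m : ℕ) :
    hsymm l m = PowerSeries.coeff m (l.map fun y => PowerSeries.mk (y ^ ·)).prod := by
  induction l generalizing m with
  | nil => cases m <;> simp [hsymm_zero, hsymm_nil_succ]
  | cons y l ih => simp [hsymm_cons, PowerSeries.coeff_mul, ih]

theorem hsymm_perm {l l' : List ℝ} (h : l.Perm l') (m : ℕ) : hsymm l m = hsymm l' m := by
  rw [hsymm_eq_coeff_prod, hsymm_eq_coeff_prod, (h.map _).prod_eq]

theorem sum_map_hsymm_cons_self (L : List ℝ) (m : ℕ) :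
    (L.map fun z => hsymm (z :: L) m).sum = (L.length + m) * hsymm L m := by
  induction L generalizing m with
  | nil => cases m <;> simp [hsymm_nil_succ]
  | cons y L ih =>
    have tail_succ : ∀ m, (L.map fun z => hsymm (z :: y :: L) (m + 1)).sum
        = (L.length + (m + 1)) * hsymm L (m + 1)
          + y * (L.map fun z => hsymm (z :: y :: L) m).sum := by
      intro m
      have h : ∀ z, hsymm (z :: y :: L) (m + 1)
          = hsymm (z :: L) (m + 1) + y * hsymm (z :: y :: L) m := fun z => by
        rw [hsymm_perm (.swap y z L), hsymm_cons_succ, hsymm_perm (.swap z y L)]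
      simp only [h, List.sum_map_add, List.sum_map_mul_left, ih]
      push_cast; ring
    simp only [List.map_cons, List.sum_cons, List.length_cons]
    induction m with
    | zero => simp [hsymm_zero, add_comm]
    | succ m ihm =>
      rw [tail_succ, hsymm_cons_succ y (y :: L)]
      push_cast at ihm ⊢
      linear_combination y * ihm - (L.length + m + 1 : ℝ) * hsymm_cons_succ y L m

theorem abs_hsymm_le (l : List ℝ) (m : ℕ) : |hsymm l m| ≤ (l.map abs).sum ^ m := by
  induction l generalizing m with
  | nil => cases m <;> simp [hsymm_zero, hsymm_nil_succ]
  | cons y l ih =>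
    rw [hsymm_cons, List.map_cons, List.sum_cons, (Commute.all _ _).add_pow']
    refine (abs_sum_le_sum_abs _ _).trans (sum_le_sum fun p hp => ?_)
    rw [abs_mul, abs_pow, nsmul_eq_mul]
    have hS : 0 ≤ (l.map abs).sum := List.sum_nonneg (by simp)
    have hchoose : (1 : ℝ) ≤ m.choose p.1 :=
      Nat.one_le_cast.mpr (Nat.choose_pos (by rw [HasAntidiagonal.mem_antidiagonal] at hp; omega))
    calc |y| ^ p.1 * |hsymm l p.2| ≤ |y| ^ p.1 * (l.map abs).sum ^ p.2 := by gcongr; exact ih _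
      _ ≤ m.choose p.1 * (|y| ^ p.1 * (l.map abs).sum ^ p.2) :=
        le_mul_of_one_le_left (by positivity) hchoose

theorem hasDerivAt_hsymm_cons (L : List ℝ) (m : ℕ) (y : ℝ) :
    HasDerivAt (fun z => hsymm (z :: L) (m + 1)) (hsymm (y :: y :: L) m) y := by
  induction m with
  | zero => simpa [hsymm_cons_succ, hsymm_zero] using (hasDerivAt_id y).const_add (hsymm L 1)
  | succ m ih =>
    have h : (fun z => hsymm (z :: L) (m + 2))
        = fun z => hsymm L (m + 2) + z * hsymm (z :: L) (m + 1) :=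
      funext fun z => hsymm_cons_succ z L (m + 1)
    rw [h, hsymm_cons_succ y (y :: L) m]
    simpa using ((hasDerivAt_id y).mul ih).const_add (hsymm L (m + 2))

theorem abs_pow_div_factorial_mul_le {t R b C : ℝ} {K m : ℕ} (ht : |t| ≤ R) (hb : |b| ≤ C ^ m) :
    |t ^ (K + m) / (K + m)! * b| ≤ R ^ K * ((R * C) ^ m / m !) := by
  have hR : 0 ≤ R := (abs_nonneg t).trans ht
  rw [abs_mul, abs_div, abs_pow, Nat.abs_cast]
  calc |t| ^ (K + m) / (K + m)! * |b| ≤ R ^ (K + m) / m ! * C ^ m := by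
        gcongr
        omega
    _ = R ^ K * ((R * C) ^ m / m !) := by rw [mul_pow, pow_add]; ring

theorem summable_pow_div_factorial_mul {a : ℕ → ℝ} {C : ℝ} (ha : ∀ m, |a m| ≤ C ^ m) (K : ℕ)
    (t : ℝ) : Summable fun m => t ^ (K + m) / (K + m)! * a m :=
  .of_norm_bounded ((Real.summable_pow_div_factorial _).mul_left _)
    fun m => abs_pow_div_factorial_mul_le le_rfl (ha m)

theorem abs_natCast_mul_pow_pred_le {t R : ℝ} (ht : |t| ≤ R) (hR : 1 ≤ R) (n : ℕ) :
    |n * t ^ (n - 1)| ≤ (2 * R) ^ n := by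
  rw [abs_mul, Nat.abs_cast, abs_pow, mul_pow]
  gcongr
  · exact_mod_cast Nat.lt_two_pow_self.le
  · calc |t| ^ (n - 1) ≤ R ^ (n - 1) := by gcongr
      _ ≤ R ^ n := pow_le_pow_right₀ hR (Nat.sub_le n 1)

theorem abs_natCast_mul_pow_pred_div_factorial_mul_le {t R b C : ℝ} {K m : ℕ} (ht : |t| ≤ R)
    (hR : 1 ≤ R) (hb : |b| ≤ C ^ m) :
    |((K + m : ℕ) : ℝ) * t ^ (K + m - 1) / (K + m)! * b|
      ≤ (2 * R) ^ K * ((2 * R * C) ^ m / m !) := by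
  have h2R : 0 ≤ 2 * R := by positivity
  calc |((K + m : ℕ) : ℝ) * t ^ (K + m - 1) / (K + m)! * b|
      = |((K + m : ℕ) : ℝ) * t ^ (K + m - 1)| / (K + m)! * |b| := by
        rw [abs_mul, abs_div, Nat.abs_cast]
    _ ≤ (2 * R) ^ (K + m) / (K + m)! * |b| := by gcongr; exact abs_natCast_mul_pow_pred_le ht hR _
    _ = |(2 * R) ^ (K + m) / (K + m)! * b| := by
        rw [abs_mul, abs_div, Nat.abs_cast, abs_of_nonneg (pow_nonneg h2R _)]
    _ ≤ (2 * R) ^ K * ((2 * R * C) ^ m / m !) :=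
        abs_pow_div_factorial_mul_le (abs_of_nonneg h2R).le hb

theorem summable_natCast_mul_pow_pred_div_factorial_mul {a : ℕ → ℝ} {C : ℝ}
    (ha : ∀ m, |a m| ≤ C ^ m) (K : ℕ) (t : ℝ) :
    Summable fun m => ((K + m : ℕ) : ℝ) * t ^ (K + m - 1) / (K + m)! * a m :=
  .of_norm_bounded ((Real.summable_pow_div_factorial _).mul_left _) fun m =>
    abs_natCast_mul_pow_pred_div_factorial_mul_le (le_max_right 1 |t|) (le_max_left _ _) (ha m)

theorem hasDerivAt_tsum_pow_div_factorial_mul {a : ℕ → ℝ} {C : ℝ} (ha : ∀ m, |a m| ≤ C ^ m)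
    (K : ℕ) (t : ℝ) :
    HasDerivAt (fun s => ∑' m, s ^ (K + m) / (K + m)! * a m)
      (∑' m, ((K + m : ℕ) : ℝ) * t ^ (K + m - 1) / (K + m)! * a m) t := by
  have hR : 1 ≤ |t| + 1 := by linarith [abs_nonneg t]
  refine hasDerivAt_tsum_of_isPreconnected
    ((Real.summable_pow_div_factorial (2 * (|t| + 1) * C)).mul_left ((2 * (|t| + 1)) ^ K))
    Metric.isOpen_ball (convex_ball t 1).isPreconnected
    (fun m s _ => ((hasDerivAt_pow _ s).div_const _).mul_const _) (fun m s hs => ?_)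
    (Metric.mem_ball_self one_pos) (summable_pow_div_factorial_mul ha K t)
    (Metric.mem_ball_self one_pos)
  refine abs_natCast_mul_pow_pred_div_factorial_mul_le ?_ hR (ha m)
  rw [Metric.mem_ball, Real.dist_eq] at hs
  linarith [abs_sub_abs_le_abs_sub s t]

theorem hasSum_dde {L : List ℝ} {K : ℕ} (hL : L.length = K + 1) (t : ℝ) :
    HasSum (fun m => t ^ (K + m) / (K + m)! * hsymm L m) (dde t L) := by
  rw [dde, if_neg (by omega), hL, Nat.add_sub_cancel]
  exact (summable_pow_div_factorial_mul (abs_hsymm_le L) K t).hasSum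

theorem dde_perm {l l' : List ℝ} (h : l.Perm l') (t : ℝ) : dde t l = dde t l' := by
  simp only [dde, h.length_eq, hsymm_perm h]

theorem hasSum_mul_dde_cons_cons (y z : ℝ) (L : List ℝ) (t : ℝ) :
    HasSum (fun m => t ^ (L.length + m) / (L.length + m)!
        * (hsymm (y :: z :: L) m - hsymm (z :: L) m))
      (y * dde t (y :: z :: L)) := by
  rw [← hasSum_nat_add_iff' 1]
  simp only [range_one, sum_singleton, hsymm_zero, sub_self, mul_zero, sub_zero]
  refine ((hasSum_dde (L := y :: z :: L) (K := L.length + 1) (by simp) t).mul_left y).congr_fun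
    fun m => ?_
  rw [show L.length + (m + 1) = L.length + 1 + m by omega, hsymm_cons_succ y (z :: L),
    add_sub_cancel_left]
  ring

theorem hasDerivAt_dde_cons (t : ℝ) (L : List ℝ) (y : ℝ) :
    HasDerivAt (fun z => dde t (z :: L)) (dde t (y :: y :: L)) y := by
  have hshift : ∀ z, HasSum
      (fun m => t ^ (L.length + 1 + m) / (L.length + 1 + m)! * hsymm (z :: L) (m + 1))
      (dde t (z :: L) - t ^ L.length / L.length !) := fun z => by
    have h := (hasSum_nat_add_iff' 1).mpr (hasSum_dde (L := z :: L) rfl t)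
    simp only [range_one, sum_singleton, add_zero, hsymm_zero, mul_one] at h
    exact h.congr_fun fun m => by rw [show L.length + 1 + m = L.length + (m + 1) by omega]
  have hexp : ∀ z, dde t (z :: L) = t ^ L.length / L.length ! + ∑' m,
      t ^ (L.length + 1 + m) / (L.length + 1 + m)! * hsymm (z :: L) (m + 1) := fun z => by
    rw [(hshift z).tsum_eq]; ring
  simp only [hexp, ← (hasSum_dde (L := y :: y :: L) (K := L.length + 1) (by simp) t).tsum_eq]
  have hS : 0 ≤ (L.map abs).sum := List.sum_nonneg (by simp)
  refine HasDerivAt.const_add _ (hasDerivAt_tsum_of_isPreconnected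
    ((Real.summable_pow_div_factorial (|t| * (2 * (|y| + 1) + (L.map abs).sum))).mul_left
      (|t| ^ (L.length + 1)))
    Metric.isOpen_ball (convex_ball y 1).isPreconnected
    (fun m z _ => (hasDerivAt_hsymm_cons L m z).const_mul _) (fun m z hz => ?_)
    (Metric.mem_ball_self one_pos) (hshift y).summable (Metric.mem_ball_self one_pos))
  refine abs_pow_div_factorial_mul_le le_rfl ((abs_hsymm_le _ m).trans ?_)
  rw [Metric.mem_ball, Real.dist_eq] at hz
  have hzy : |z| ≤ |y| + 1 := by linarith [abs_sub_abs_le_abs_sub z y]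
  simp only [List.map_cons, List.sum_cons]
  exact pow_le_pow_left₀ (by positivity) (by linarith) m

theorem sq_mul_natCast_mul_pow_pred_div_factorial (t : ℝ) (n : ℕ) :
    t ^ 2 * ((n : ℝ) * t ^ (n - 1) / n !) = t ^ (n + 1) / (n + 1)! * ((n + 1) * n) := by
  rcases n with _ | n
  · simp
  · simp only [Nat.add_sub_cancel, Nat.factorial_succ]
    push_cast
    field_simp
    ring

theorem hasSum_sq_mul_deriv_dde {L : List ℝ} {K : ℕ} (hL : L.length = K + 1) (t : ℝ) :
    HasSum (fun m => t ^ (K + 1 + m) / (K + 1 + m)! * ((K + 1 + m) * (K + m) * hsymm L m))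
      (t ^ 2 * deriv (fun s => dde s L) t) := by
  have hfun : (fun s => dde s L) = fun s => ∑' m, s ^ (K + m) / (K + m)! * hsymm L m :=
    funext fun s => (hasSum_dde hL s).tsum_eq.symm
  rw [hfun, (hasDerivAt_tsum_pow_div_factorial_mul (abs_hsymm_le L) K t).deriv]
  refine ((summable_natCast_mul_pow_pred_div_factorial_mul (abs_hsymm_le L) K t).hasSum.mul_left
    (t ^ 2)).congr_fun fun m => ?_
  have h := sq_mul_natCast_mul_pow_pred_div_factorial t (K + m)
  rw [show K + 1 + m = K + m + 1 by omega]
  push_cast at h ⊢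
  linear_combination -(hsymm L m) * h

theorem length_seg (x : ℕ → ℝ) (q : ℕ) : (seg x 0 q).length = q + 1 := by
  simp [seg]

theorem sum_map_seg {M : Type*} [AddCommMonoid M] (f : ℝ → M) (x : ℕ → ℝ) (q : ℕ) :
    ((seg x 0 q).map f).sum = ∑ i ∈ range (q + 1), f (x i) := by
  rw [Finset.sum, range_val, Multiset.range, Multiset.map_coe, Multiset.sum_coe]
  simp [seg, Function.comp_def]

theorem seg_update (x : ℕ → ℝ) (q i : ℕ) (y : ℝ) :
    seg (Function.update x i y) 0 q = (seg x 0 q).set i y :=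
  List.ext_getElem (by simp [seg]) fun j _ _ => by
    simp [seg, List.getElem_set, Function.update_apply, eq_comm]

theorem deriv_dde_seg_update (t : ℝ) (x : ℕ → ℝ) {q i : ℕ} (hi : i ≤ q) :
    deriv (fun y => dde t (seg (Function.update x i y) 0 q)) (x i) = dde t (x i :: seg x 0 q) := by
  have hperm : ∀ y, (seg (Function.update x i y) 0 q).Perm (y :: (seg x 0 q).eraseIdx i) :=
    fun y => seg_update x q i y ▸ List.set_perm_cons_eraseIdx (by simp [length_seg]; omega) y
  simp only [dde_perm (hperm _), (hasDerivAt_dde_cons t _ (x i)).deriv]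
  exact dde_perm (.cons _ (by simpa using (hperm (x i)).symm)) t

theorem sum_range_sum_Icc_add_self {M : Type*} [AddCommMonoid M] (q : ℕ) (A : ℕ → ℕ → M)
    (hA : ∀ i j, A i j = A j i) :
    (∑ i ∈ range (q + 1), ∑ j ∈ Icc i q, A i j) + ∑ i ∈ range (q + 1), ∑ j ∈ Icc i q, A i j
      = ∑ i ∈ range (q + 1), ∑ j ∈ range (q + 1), A i j + ∑ i ∈ range (q + 1), A i i := by
  -- read the second copy as the sum over `j ≤ i`; by symmetry it fills in the lower triangle
  nth_rewrite 2 [sum_comm' (t' := range (q + 1)) (s' := fun j => range (j + 1))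
    (by intros; simp; omega)]
  rw [← sum_add_distrib, ← sum_add_distrib]
  refine sum_congr rfl fun i hi => ?_
  rw [sum_range_succ, sum_congr rfl fun j _ => hA j i, ← Finset.Ico_add_one_right_eq_Icc,
    ← sum_range_add_sum_Ico (fun j => A i j) (mem_range.mp hi).le]
  abel

theorem sum_range_sum_Icc_right {M : Type*} [AddCommMonoid M] (q : ℕ) (f : ℕ → M) :
    ∑ i ∈ range (q + 1), ∑ j ∈ Icc i q, f j = ∑ j ∈ range (q + 1), (j + 1) • f j := by
  rw [sum_comm' (t' := range (q + 1)) (s' := fun j => range (j + 1)) (by intros; simp; omega)]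
  simp

theorem sum_range_sum_Icc_hsymm_sub (x : ℕ → ℝ) (q m : ℕ) :
    ∑ i ∈ range (q + 1), ∑ j ∈ Icc i q,
        (hsymm (x i :: x j :: seg x 0 q) m - hsymm (x j :: seg x 0 q) m)
      = (q + 1 + m) * (q + m) / 2 * hsymm (seg x 0 q) m
        - ∑ i ∈ range (q + 1), (i : ℝ) * hsymm (x i :: seg x 0 q) m := by
  set l := seg x 0 q
  have euler : ∑ j ∈ range (q + 1), hsymm (x j :: l) m = (q + 1 + m) * hsymm l m := by
    rw [← sum_map_seg (fun y => hsymm (y :: l) m), sum_map_hsymm_cons_self, length_seg]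
    push_cast
    ring
  have euler_cons : ∀ j, ∑ i ∈ range (q + 1), hsymm (x i :: x j :: l) m
      = (q + 2 + m) * hsymm (x j :: l) m - hsymm (x j :: x j :: l) m := fun j => by
    have h := sum_map_hsymm_cons_self (x j :: l) m
    rw [List.map_cons, List.sum_cons, sum_map_seg, List.length_cons, length_seg] at h
    push_cast at h
    linarith
  have hsym := sum_range_sum_Icc_add_self q (fun i j => hsymm (x i :: x j :: l) m)
    fun i j => hsymm_perm (.swap _ _ _) m
  rw [sum_comm, sum_congr rfl fun j _ => euler_cons j, sum_sub_distrib, ← mul_sum, euler] at hsym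
  simp only [sum_sub_distrib, sum_range_sum_Icc_right, nsmul_eq_mul, Nat.cast_add, Nat.cast_one,
    add_mul, one_mul, sum_add_distrib, euler]
  linarith

/-- **Weighted, repeated-argument, double, less-than sum simplification** (Lemma 3): for every
`q ≥ 0`, tuple `(x_0, …, x_q)` and real `τ`,
`Σ_{0≤i≤j≤q} x_i e^{-τ[x_0,…,x_q,x_i,x_j]}
  = (−(τ²/2) ∂/∂τ − Σ_{i=0}^q i ∂/∂x_i) e^{-τ[x_0,…,x_q]}`,
where `∂/∂x_i` is the derivative at `y = x_i` of `y ↦ e^{-τ[x_0,…,x_{i−1},y,x_{i+1},…,x_q]}`. -/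
theorem weighted_repeated_double_lessthan_sum (q : ℕ) (x : ℕ → ℝ) (τ : ℝ) :
    ∑ i ∈ Finset.range (q + 1), ∑ j ∈ Finset.Icc i q,
        x i * dde (-τ) (seg x 0 q ++ [x i, x j])
      = -(τ ^ 2 / 2) * deriv (fun t : ℝ => dde (-t) (seg x 0 q)) τ
        - ∑ i ∈ Finset.range (q + 1),
            (i : ℝ) * deriv (fun y : ℝ => dde (-τ) (seg (Function.update x i y) 0 q)) (x i) := by
  set l := seg x 0 q
  have hl : l.length = q + 1 := length_seg x q
  have hpair : ∀ i j, HasSum (fun m => (-τ) ^ (q + 1 + m) / (q + 1 + m)!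
      * (hsymm (x i :: x j :: l) m - hsymm (x j :: l) m)) (x i * dde (-τ) (l ++ [x i, x j])) :=
    fun i j => by
      rw [dde_perm List.perm_append_comm]
      simpa only [hl, List.cons_append, List.nil_append]
        using hasSum_mul_dde_cons_cons (x i) (x j) l (-τ)
  have htime : HasSum (fun m => (-τ) ^ (q + 1 + m) / (q + 1 + m)!
      * ((q + 1 + m) * (q + m) / 2 * hsymm l m))
      (-(τ ^ 2 / 2) * deriv (fun t => dde (-t) l) τ) := by
    rw [deriv_comp_neg (fun s => dde s l), show -(τ ^ 2 / 2) * -deriv (fun s => dde s l) (-τ)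
      = 1 / 2 * ((-τ) ^ 2 * deriv (fun s => dde s l) (-τ)) by ring]
    exact ((hasSum_sq_mul_deriv_dde hl (-τ)).mul_left _).congr_fun fun m => by ring
  have hspace : ∀ i ∈ range (q + 1), HasSum
      (fun m => (-τ) ^ (q + 1 + m) / (q + 1 + m)! * (i * hsymm (x i :: l) m))
      (i * deriv (fun y => dde (-τ) (seg (Function.update x i y) 0 q)) (x i)) := fun i hi => by
    rw [deriv_dde_seg_update _ _ (Nat.le_of_lt_succ (mem_range.mp hi))]
    exact ((hasSum_dde (L := x i :: l) (by simp [hl]) (-τ)).mul_left _).congr_fun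
      fun m => mul_left_comm _ _ _
  refine (hasSum_sum fun i _ => hasSum_sum fun j _ => hpair i j).unique
    ((htime.sub (hasSum_sum hspace)).congr_fun fun m => ?_)
  simp only [← mul_sum, ← mul_sub]
  exact congrArg _ (sum_range_sum_Icc_hsymm_sub x q m)
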